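/- arXiv:1308.3374 — 2 statements merged into one kernel-verified Lean document; each statement's English description precedes it below -/
import Mathlib

section
/- Let C be an m×m Hermitian positive definite complex matrix and let γ > 0 be a real number. Then over all m×m Hermitian positive definite complex matrices Q, the function f(Q) = -γ·log(det Q) - Re(tr(C·Q⁻¹)) (where det Q is a positive real number since Q is Hermitian positive definite) attains its maximum value -γ·log(det(γ⁻¹·C)) - γ·m uniquely at Q = γ⁻¹·C; that is, for every Hermitian positive definite Q one has -γ·log(det Q) - Re(tr(C·Q⁻¹)) ≤ -γ·log(det(γ⁻¹·C)) - γ·m, with equality if and only if Q = γ⁻¹·C. -/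
/-!
Put `A = γ⁻¹ • C` and `M = Q^{-1/2} A Q^{-1/2}`, a positive definite matrix with
`det M = det A / det Q` and `tr M = tr (A Q⁻¹)`. Then the objective at `Q` minus its value at `A`
is `γ (log det M - tr M + m) = -γ ∑ᵢ (λᵢ - 1 - log λᵢ)` over the eigenvalues `λᵢ > 0` of `M`.
Each term is nonnegative since `log x ≤ x - 1`, with equality only at `x = 1`; so the gap vanishes
iff `M = 1`, i.e. iff `Q = A`.
-/

open Matrix ComplexOrder

namespace Matrix

variable {n 𝕜 : Type*} [Fintype n] [DecidableEq n] [RCLike 𝕜]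

theorem IsHermitian.eq_one_of_eigenvalues_eq_one {M : Matrix n n 𝕜} (hM : M.IsHermitian)
    (h : ∀ i, hM.eigenvalues i = 1) : M = 1 := by
  rw [hM.spectral_theorem, show RCLike.ofReal ∘ hM.eigenvalues = (1 : n → 𝕜) by ext i; simp [h],
    diagonal_one', map_one]

theorem PosDef.re_trace_sub_card_sub_log_det {M : Matrix n n 𝕜} (hM : M.PosDef) :
    RCLike.re M.trace - Fintype.card n - Real.log (RCLike.re M.det) =
      ∑ i, (hM.1.eigenvalues i - 1 - Real.log (hM.1.eigenvalues i)) := by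
  rw [hM.1.trace_eq_sum_eigenvalues, hM.1.det_eq_prod_eigenvalues, ← RCLike.ofReal_sum,
    ← RCLike.ofReal_prod, RCLike.ofReal_re, RCLike.ofReal_re,
    Real.log_prod fun i _ => (hM.eigenvalues_pos i).ne', Finset.sum_sub_distrib,
    Finset.sum_sub_distrib]
  simp

theorem PosDef.log_det_le_re_trace_sub_card {M : Matrix n n 𝕜} (hM : M.PosDef) :
    Real.log (RCLike.re M.det) ≤ RCLike.re M.trace - Fintype.card n := by
  have hsum : 0 ≤ ∑ i, (hM.1.eigenvalues i - 1 - Real.log (hM.1.eigenvalues i)) :=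
    Finset.sum_nonneg fun i _ => by
      linarith [Real.log_le_sub_one_of_pos (hM.eigenvalues_pos i)]
  linarith [hM.re_trace_sub_card_sub_log_det]

theorem PosDef.log_det_eq_re_trace_sub_card_iff {M : Matrix n n 𝕜} (hM : M.PosDef) :
    Real.log (RCLike.re M.det) = RCLike.re M.trace - Fintype.card n ↔ M = 1 := by
  refine ⟨fun h => hM.1.eq_one_of_eigenvalues_eq_one fun i => ?_, by rintro rfl; simp⟩
  have hterm : ∀ j ∈ Finset.univ, 0 ≤ hM.1.eigenvalues j - 1 - Real.log (hM.1.eigenvalues j) :=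
    fun j _ => by linarith [Real.log_le_sub_one_of_pos (hM.eigenvalues_pos j)]
  have hzero := (Finset.sum_eq_zero_iff_of_nonneg hterm).mp
    (by linarith [hM.re_trace_sub_card_sub_log_det]) i (Finset.mem_univ i)
  by_contra hne
  linarith [Real.log_lt_sub_one_of_pos (hM.eigenvalues_pos i) hne]

open scoped MatrixOrder in
theorem PosDef.exists_isUnit_isHermitian_mul_self {Q : Matrix n n 𝕜} (hQ : Q.PosDef) :
    ∃ S : Matrix n n 𝕜, IsUnit S ∧ S.IsHermitian ∧ S * S = Q := by
  have hS : CFC.sqrt Q * CFC.sqrt Q = Q := CFC.sqrt_mul_sqrt_self Q hQ.posSemidef.nonneg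
  exact ⟨CFC.sqrt Q, isUnit_of_mul_isUnit_left (hS ▸ hQ.isUnit),
    (CFC.sqrt_nonneg Q).posSemidef.isHermitian, hS⟩

/-- The witness is `Q^{-1/2} A Q^{-1/2}`, a positive definite stand-in for `A * Q⁻¹`. -/
theorem PosDef.exists_posDef_log_det_trace_eq {A Q : Matrix n n 𝕜} (hA : A.PosDef)
    (hQ : Q.PosDef) :
    ∃ M : Matrix n n 𝕜, M.PosDef ∧
      Real.log (RCLike.re M.det) = Real.log (RCLike.re A.det) - Real.log (RCLike.re Q.det) ∧
      M.trace = (A * Q⁻¹).trace ∧ (M = 1 ↔ A = Q) := by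
  obtain ⟨S, hSunit, hSherm, rfl⟩ := hQ.exists_isUnit_isHermitian_mul_self
  let _ : Invertible S := hSunit.invertible
  have hM : (S⁻¹ * A * S⁻¹).PosDef := by
    simpa only [star_eq_conjTranspose, hSherm.inv.eq] using
      (isUnit_nonsing_inv_iff.mpr hSunit).posDef_star_left_conjugate_iff.mpr hA
  refine ⟨_, hM, ?_, ?_, ?_⟩
  · have hdet : (S⁻¹ * A * S⁻¹).det * (S * S).det = A.det := by
      have := det_nonsing_inv_mul_det S ((isUnit_iff_isUnit_det S).mp hSunit)
      simp only [det_mul]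
      linear_combination (A.det * (S⁻¹.det * S.det + 1)) * this
    obtain ⟨a, ha, ha'⟩ := RCLike.pos_iff_exists_ofReal.mp hM.det_pos
    obtain ⟨q, hq, hq'⟩ := RCLike.pos_iff_exists_ofReal.mp hQ.det_pos
    rw [← hdet, ← ha', ← hq', ← RCLike.ofReal_mul, RCLike.ofReal_re, RCLike.ofReal_re,
      RCLike.ofReal_re, Real.log_mul ha.ne' hq.ne', add_sub_cancel_right]
  · rw [mul_inv_rev, ← mul_assoc, trace_mul_cycle A]
  · rw [mul_inv_eq_iff_eq_mul_of_invertible, inv_mul_eq_iff_eq_mul_of_invertible, one_mul]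

theorem PosDef.log_det_sub_log_det_le {A Q : Matrix n n 𝕜} (hA : A.PosDef) (hQ : Q.PosDef) :
    Real.log (RCLike.re A.det) - Real.log (RCLike.re Q.det) ≤
      RCLike.re (A * Q⁻¹).trace - Fintype.card n := by
  obtain ⟨M, hM, hdet, htrace, -⟩ := hA.exists_posDef_log_det_trace_eq hQ
  simpa only [hdet, htrace] using hM.log_det_le_re_trace_sub_card

theorem PosDef.log_det_sub_log_det_eq_iff {A Q : Matrix n n 𝕜} (hA : A.PosDef) (hQ : Q.PosDef) :
    Real.log (RCLike.re A.det) - Real.log (RCLike.re Q.det) =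
      RCLike.re (A * Q⁻¹).trace - Fintype.card n ↔ A = Q := by
  obtain ⟨M, hM, hdet, htrace, hone⟩ := hA.exists_posDef_log_det_trace_eq hQ
  simpa only [hdet, htrace, hone] using hM.log_det_eq_re_trace_sub_card_iff

end Matrix

/-- The maximizing covariance matrix: over Hermitian positive definite `Q`, the function
`Q ↦ -γ·log(det Q) - Re(tr(C·Q⁻¹))` attains its maximum `-γ·log(det(γ⁻¹·C)) - γ·m`
uniquely at `Q = γ⁻¹ • C`. -/
theorem stmt0 (m : ℕ) (C : Matrix (Fin m) (Fin m) ℂ) (hC : C.PosDef)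
    (γ : ℝ) (hγ : 0 < γ) :
    ∀ Q : Matrix (Fin m) (Fin m) ℂ, Q.PosDef →
      (-γ * Real.log Q.det.re - (Matrix.trace (C * Q⁻¹)).re
          ≤ -γ * Real.log ((γ⁻¹ • C : Matrix (Fin m) (Fin m) ℂ).det.re) - γ * m) ∧
      ((-γ * Real.log Q.det.re - (Matrix.trace (C * Q⁻¹)).re
          = -γ * Real.log ((γ⁻¹ • C : Matrix (Fin m) (Fin m) ℂ).det.re) - γ * m)
        ↔ Q = γ⁻¹ • C) := by
  intro Q hQ
  have hA : (γ⁻¹ • C).PosDef := hC.smul (inv_pos.mpr hγ)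
  have htrace : (Matrix.trace (C * Q⁻¹)).re = γ * (Matrix.trace (γ⁻¹ • C * Q⁻¹)).re := by
    rw [smul_mul, trace_smul, Complex.real_smul, Complex.re_ofReal_mul,
      mul_inv_cancel_left₀ hγ.ne']
  have hgap : -γ * Real.log Q.det.re - (Matrix.trace (C * Q⁻¹)).re -
      (-γ * Real.log ((γ⁻¹ • C : Matrix (Fin m) (Fin m) ℂ).det.re) - γ * m) =
      γ * ((Real.log (γ⁻¹ • C).det.re - Real.log Q.det.re) -
        ((Matrix.trace (γ⁻¹ • C * Q⁻¹)).re - m)) := by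
    rw [htrace]; ring
  have hle := hA.log_det_sub_log_det_le hQ
  have heq := hA.log_det_sub_log_det_eq_iff hQ
  simp only [RCLike.re_to_complex, Fintype.card_fin] at hle heq
  refine ⟨sub_nonpos.mp ?_, ?_⟩
  · rw [hgap]
    exact mul_nonpos_of_nonneg_of_nonpos hγ.le (sub_nonpos.mpr hle)
  · rw [eq_comm (a := Q), ← heq, ← sub_eq_zero, hgap, mul_eq_zero, sub_eq_zero]
    simp only [hγ.ne', false_or]
end

section
/- Let Q₀ be an m×m Hermitian positive definite complex matrix, let A = [a | B] be an m×d complex matrix partitioned into a column a ∈ ℂ^m and an m×(d-1) block B, and suppose A*·Q₀⁻¹·A is invertible (hence B*·Q₀⁻¹·B is invertible). Define Φ_B := B·(B*·Q₀⁻¹·B)⁻¹·B*·Q₀⁻¹, Φ_B^⊥ := I_m - Φ_B, and ã := Φ_B^⊥·a. Then ã*·Q₀⁻¹·ã ≠ 0, and with Φ_ã := ã·(ã*·Q₀⁻¹·ã)⁻¹·ã*·Q₀⁻¹ and Φ_A := A·(A*·Q₀⁻¹·A)⁻¹·A*·Q₀⁻¹, the decomposition Φ_A = Φ_B + Φ_ã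 holds; equivalently, I_m - Φ_A = Φ_B^⊥ - Φ_ã. -/
/-!
Write `P_C = weightedProj W C` for the projector onto the column space of `C` that is orthogonal
for `⟪x, y⟫ = yᴴ W x`, where `W = Q₀⁻¹`. The sum `P_B + P_ã` fixes every column of `A`: it fixes `B`
because `ã` is `W`-orthogonal to `B`, so `P_ã B = 0`, and it fixes `a` because
`P_ã a = P_ã ã = ã = a - P_B a`. Since `B` and `ã` are `A` times a matrix, `P_B P_A = P_B` and
`P_ã P_A = P_ã`, whence `P_A = (P_B + P_ã) P_A = P_B + P_ã`. The Gram matrices of `B` and `ã` are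
invertible because both are `A` times a matrix with a left inverse, hence injective, and `W` is
positive definite.
-/

open Matrix ComplexOrder

namespace Matrix

variable {m n p R : Type*} [Fintype n]

theorem injective_mulVec_mul_of_mul_eq_one [Semiring R] [Fintype p] [DecidableEq p]
    {C : Matrix m n R} (hC : Function.Injective C.mulVec)
    {T : Matrix n p R} {L : Matrix p n R} (hLT : L * T = 1) :
    Function.Injective (C * T).mulVec := by
  have hT : Function.LeftInverse L.mulVec T.mulVec := fun v => by
    rw [mulVec_mulVec, hLT, one_mulVec]
  have hCT : (C * T).mulVec = C.mulVec ∘ T.mulVec := funext fun v => (mulVec_mulVec v C T).symm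
  exact hCT ▸ hC.comp hT.injective

theorem fromCols_mul_fromRows_zero_one [Semiring R] [DecidableEq n] [Fintype p]
    (a : Matrix m p R) (B : Matrix m n R) :
    fromCols a B * fromRows (0 : Matrix p n R) (1 : Matrix n n R) = B := by
  simp [fromCols_mul_fromRows]

variable [Fintype m]

section CommRing

variable [DecidableEq n] [CommRing R] [StarRing R] {W : Matrix m m R} {C : Matrix m n R}

noncomputable def weightedProj (W : Matrix m m R) (C : Matrix m n R) : Matrix m m R :=
  C * (Cᴴ * W * C)⁻¹ * Cᴴ * W

theorem injective_mulVec_of_isUnit_conjTranspose_mul_mul (hC : IsUnit (Cᴴ * W * C)) :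
    Function.Injective C.mulVec := by
  refine Function.Injective.of_comp (f := (Cᴴ * W).mulVec) ?_
  simpa only [Function.comp_def, mulVec_mulVec] using mulVec_injective_of_isUnit hC

theorem weightedProj_mul_self (hC : IsUnit (Cᴴ * W * C)) : weightedProj W C * C = C := by
  have h := nonsing_inv_mul _ ((isUnit_iff_isUnit_det _).1 hC)
  calc weightedProj W C * C = C * ((Cᴴ * W * C)⁻¹ * (Cᴴ * W * C)) := by
        simp only [weightedProj, Matrix.mul_assoc]
    _ = C := by rw [h, Matrix.mul_one]

theorem conjTranspose_mul_weightedProj (hC : IsUnit (Cᴴ * W * C)) :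
    Cᴴ * W * weightedProj W C = Cᴴ * W := by
  have h := mul_nonsing_inv _ ((isUnit_iff_isUnit_det _).1 hC)
  calc Cᴴ * W * weightedProj W C = (Cᴴ * W * C) * (Cᴴ * W * C)⁻¹ * (Cᴴ * W) := by
        simp only [weightedProj, Matrix.mul_assoc]
    _ = Cᴴ * W := by rw [h, Matrix.one_mul]

theorem mul_weightedProj_of_mul_eq {X : Matrix m m R} (hX : X * C = C) :
    X * weightedProj W C = weightedProj W C := by
  simp only [weightedProj, ← Matrix.mul_assoc, hX]

theorem weightedProj_mul_of_conjTranspose_mul_eq_zero {D : Matrix m p R}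
    (h : Cᴴ * W * D = 0) : weightedProj W C * D = 0 := by
  calc weightedProj W C * D = C * (Cᴴ * W * C)⁻¹ * (Cᴴ * W * D) := by
        simp only [weightedProj, Matrix.mul_assoc]
    _ = 0 := by rw [h, Matrix.mul_zero]

theorem weightedProj_mul_weightedProj_of_eq_mul [Fintype p] [DecidableEq p]
    (hC : IsUnit (Cᴴ * W * C)) (T : Matrix n p R) :
    weightedProj W (C * T) * weightedProj W C = weightedProj W (C * T) := by
  calc weightedProj W (C * T) * weightedProj W C
      = C * T * ((C * T)ᴴ * W * (C * T))⁻¹ * Tᴴ * (Cᴴ * W * weightedProj W C) := by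
        simp only [weightedProj, conjTranspose_mul, Matrix.mul_assoc]
    _ = weightedProj W (C * T) := by
        rw [conjTranspose_mul_weightedProj hC]
        simp only [weightedProj, conjTranspose_mul, Matrix.mul_assoc]

theorem weightedProj_mul_weightedProj_eq_zero [Fintype p] [DecidableEq p] {D : Matrix m p R}
    (h : Dᴴ * W * C = 0) : weightedProj W D * weightedProj W C = 0 := by
  calc weightedProj W D * weightedProj W C
      = D * (Dᴴ * W * D)⁻¹ * (Dᴴ * W * C) * (Cᴴ * W * C)⁻¹ * Cᴴ * W := by
        simp only [weightedProj, Matrix.mul_assoc]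
    _ = 0 := by simp [h]

theorem conjTranspose_weightedProj_mul (hW : W.IsHermitian) :
    (weightedProj W C)ᴴ * W = W * weightedProj W C := by
  simp only [weightedProj, conjTranspose_mul, conjTranspose_nonsing_inv, hW.eq,
    conjTranspose_conjTranspose, Matrix.mul_assoc]

variable [DecidableEq m]

theorem conjTranspose_residual_mul_mul_eq_zero (hW : W.IsHermitian) (hC : IsUnit (Cᴴ * W * C))
    (x : Matrix m p R) : ((1 - weightedProj W C) * x)ᴴ * W * C = 0 := by
  calc ((1 - weightedProj W C) * x)ᴴ * W * C
      = xᴴ * (W * C - (weightedProj W C)ᴴ * W * C) := by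
        simp only [conjTranspose_mul, conjTranspose_sub, Matrix.sub_mul,
          Matrix.mul_sub, Matrix.one_mul, Matrix.mul_assoc]
    _ = 0 := by
        rw [conjTranspose_weightedProj_mul hW, Matrix.mul_assoc, weightedProj_mul_self hC,
          sub_self, Matrix.mul_zero]

theorem fromCols_mul_fromRows_residual [Fintype p] [DecidableEq p]
    (a : Matrix m p R) (B : Matrix m n R) :
    fromCols a B * fromRows (1 : Matrix p p R) (-((Bᴴ * W * B)⁻¹ * (Bᴴ * W * a))) =
      (1 - weightedProj W B) * a := by
  rw [fromCols_mul_fromRows, weightedProj, Matrix.sub_mul, Matrix.one_mul, Matrix.mul_one,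
    Matrix.mul_neg, ← sub_eq_add_neg]
  simp only [Matrix.mul_assoc]

end CommRing

section Field

variable {n₁ n₂ K : Type*} [Fintype n₁] [DecidableEq n₁] [Fintype n₂] [DecidableEq n₂]
  [Field K] [PartialOrder K] [StarRing K] {W : Matrix m m K} {a : Matrix m n₁ K}
  {B : Matrix m n₂ K}

theorem isUnit_conjTranspose_mul_mul_of_injective [DecidableEq n] (hW : W.PosDef)
    {C : Matrix m n K} (hC : Function.Injective C.mulVec) : IsUnit (Cᴴ * W * C) :=
  (hW.conjTranspose_mul_mul_same hC).isUnit

theorem isUnit_conjTranspose_mul_mul_right_of_fromCols (hW : W.PosDef)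
    (hA : IsUnit ((fromCols a B)ᴴ * W * fromCols a B)) : IsUnit (Bᴴ * W * B) := by
  have hL : (fromCols 0 1 : Matrix n₂ (n₁ ⊕ n₂) K) *
      fromRows (0 : Matrix n₁ n₂ K) (1 : Matrix n₂ n₂ K) = 1 := by
    simp [fromCols_mul_fromRows]
  refine isUnit_conjTranspose_mul_mul_of_injective hW ?_
  rw [← fromCols_mul_fromRows_zero_one a B]
  exact injective_mulVec_mul_of_mul_eq_one
    (injective_mulVec_of_isUnit_conjTranspose_mul_mul hA) hL

variable [DecidableEq m]

theorem isUnit_conjTranspose_mul_mul_residual (hW : W.PosDef)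
    (hA : IsUnit ((fromCols a B)ᴴ * W * fromCols a B)) :
    IsUnit (((1 - weightedProj W B) * a)ᴴ * W * ((1 - weightedProj W B) * a)) := by
  have hL : (fromCols 1 0 : Matrix n₁ (n₁ ⊕ n₂) K) *
      fromRows (1 : Matrix n₁ n₁ K) (-((Bᴴ * W * B)⁻¹ * (Bᴴ * W * a))) = 1 := by
    simp [fromCols_mul_fromRows]
  refine isUnit_conjTranspose_mul_mul_of_injective hW ?_
  rw [← fromCols_mul_fromRows_residual]
  exact injective_mulVec_mul_of_mul_eq_one
    (injective_mulVec_of_isUnit_conjTranspose_mul_mul hA) hL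

theorem weightedProj_fromCols (hW : W.PosDef)
    (hA : IsUnit ((fromCols a B)ᴴ * W * fromCols a B)) :
    weightedProj W (fromCols a B) =
      weightedProj W B + weightedProj W ((1 - weightedProj W B) * a) := by
  have hB := isUnit_conjTranspose_mul_mul_right_of_fromCols hW hA
  have hr := isUnit_conjTranspose_mul_mul_residual hW hA
  set P := weightedProj W (fromCols a B)
  set PB := weightedProj W B
  set r := (1 - PB) * a
  have hrB : rᴴ * W * B = 0 := conjTranspose_residual_mul_mul_eq_zero hW.isHermitian hB a
  have hsplit : PB * a + r = a := by
    simp only [r, Matrix.sub_mul, Matrix.one_mul, add_sub_cancel]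
  have hra : weightedProj W r * a = r := by
    rw [← hsplit, Matrix.mul_add, ← Matrix.mul_assoc, weightedProj_mul_weightedProj_eq_zero hrB,
      Matrix.zero_mul, zero_add, weightedProj_mul_self hr]
  have hfix : (PB + weightedProj W r) * fromCols a B = fromCols a B := by
    rw [mul_fromCols, Matrix.add_mul, Matrix.add_mul, hra, hsplit, weightedProj_mul_self hB,
      weightedProj_mul_of_conjTranspose_mul_eq_zero hrB, add_zero]
  have hBP : PB * P = PB := by
    have h := weightedProj_mul_weightedProj_of_eq_mul hA
      (fromRows (0 : Matrix n₁ n₂ K) (1 : Matrix n₂ n₂ K))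
    rwa [fromCols_mul_fromRows_zero_one] at h
  have hrP : weightedProj W r * P = weightedProj W r := by
    have h := weightedProj_mul_weightedProj_of_eq_mul hA
      (fromRows (1 : Matrix n₁ n₁ K) (-((Bᴴ * W * B)⁻¹ * (Bᴴ * W * a))))
    rwa [fromCols_mul_fromRows_residual] at h
  calc P = (PB + weightedProj W r) * P := (mul_weightedProj_of_mul_eq hfix).symm
    _ = PB + weightedProj W r := by rw [Matrix.add_mul, hBP, hrP]

end Field

end Matrix

/-- Decomposition of the weighted projector: for `A = [a | B]` with Gram matrix
`Aᴴ Q₀⁻¹ A` invertible, the residual `ã = Φ_B^⊥ a` has `ãᴴ Q₀⁻¹ ã ≠ 0` and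
`Φ_A = Φ_B + Φ_ã`; equivalently `I - Φ_A = Φ_B^⊥ - Φ_ã`. -/
theorem stmt9 (m k : ℕ) (Q₀ : Matrix (Fin m) (Fin m) ℂ) (hQ₀ : Q₀.PosDef)
    (a : Matrix (Fin m) (Fin 1) ℂ) (B : Matrix (Fin m) (Fin k) ℂ)
    (A : Matrix (Fin m) (Fin 1 ⊕ Fin k) ℂ) (hA : A = fromCols a B)
    (hGram : IsUnit (Aᴴ * Q₀⁻¹ * A))
    (ΦA : Matrix (Fin m) (Fin m) ℂ) (hΦA : ΦA = A * (Aᴴ * Q₀⁻¹ * A)⁻¹ * Aᴴ * Q₀⁻¹)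
    (ΦB : Matrix (Fin m) (Fin m) ℂ) (hΦB : ΦB = B * (Bᴴ * Q₀⁻¹ * B)⁻¹ * Bᴴ * Q₀⁻¹)
    (ΦBperp : Matrix (Fin m) (Fin m) ℂ) (hΦBperp : ΦBperp = 1 - ΦB)
    (atilde : Matrix (Fin m) (Fin 1) ℂ) (hatilde : atilde = ΦBperp * a)
    (Φa : Matrix (Fin m) (Fin m) ℂ)
    (hΦa : Φa = atilde * (atildeᴴ * Q₀⁻¹ * atilde)⁻¹ * atildeᴴ * Q₀⁻¹) :
    atildeᴴ * Q₀⁻¹ * atilde ≠ 0 ∧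
    ΦA = ΦB + Φa ∧
    (1 : Matrix (Fin m) (Fin m) ℂ) - ΦA = ΦBperp - Φa := by
  have hsum : ΦA = ΦB + Φa := by
    subst_vars
    exact weightedProj_fromCols hQ₀.inv hGram
  refine ⟨?_, hsum, by rw [hsum, hΦBperp]; abel⟩
  subst_vars
  exact (isUnit_conjTranspose_mul_mul_residual hQ₀.inv hGram).ne_zero
end
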